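/- Let M be a representation of Q on (V_i) and B = (B_i : V_i → E_i)_{i∈Q0} a family of linear maps. The following are equivalent: (a) for every subrepresentation U of M and every subspace L ⊆ k such that U_i ⊆ ker B_i for all i ∈ Q0 whenever L = 0, one has Σ_{i∈Q0} dim U_i − |α|·dim L ≤ 0 (i.e. the framed pair (M,B) is semi-stable for the stability parameter c_α with value 1 at every vertex of Q and −|α| at the framing vertex); (b) the inequality in (a) is strict for every such pair (U,L) other than ((0)_i,0) and ((V_i)_i,k) (i.e. (M,B) is c_α-stable); (c) no nonzero subrepresentation U of M satisfies U_i ⊆ ker B_i for all i ∈ Q0; (d) for every j ∈ Q0 the linear map V_j → ⊕_q E_{t(q)}, v ↦ (B_{t(q)}(M_q(v)))_q, where q runs over all paths in Q with source j (including the trivial path at j), is injective (i.e. the homomorphism ψ_{M,B} : M → I_β is injective). -/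

import Mathlib

open Module

/-- Paths in a quiver with arrow set `Q1`, source map `src` and target map `tgt`. -/
inductive QPath {Q0 Q1 : Type} (src tgt : Q1 → Q0) : Q0 → Q0 → Type
  | nil (i : Q0) : QPath src tgt i i
  | cons {i : Q0} (a : Q1) (p : QPath src tgt i (src a)) : QPath src tgt i (tgt a)

/-- The composite linear map `M_p` along a path `p`. -/
def pathMap {k Q0 Q1 : Type} [Field k] {src tgt : Q1 → Q0} {V : Q0 → Type}
    [∀ i, AddCommGroup (V i)] [∀ i, Module k (V i)]
    (M : ∀ a : Q1, V (src a) →ₗ[k] V (tgt a)) :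
    {i j : Q0} → QPath src tgt i j → (V i →ₗ[k] V j)
  | _, _, QPath.nil _ => LinearMap.id
  | _, _, QPath.cons a p => (M a).comp (pathMap M p)

/-!
Since `k` has only the subspaces `0` and `k`, the stability inequality has two cases. For
`L = k` it says `Σ dim U_i ≤ |α|`, which always holds, strictly unless `U = V`; for `L = 0`
it says that every subrepresentation inside `ker B` is zero. So semi-stability, stability and
(c) coincide. Finally, the smallest subrepresentation containing `v ∈ V_j` is spanned by the
`M_q v` for the paths `q` starting at `j`, so it lies in `ker B` exactly when `ψ_{M,B}` kills `v`.
-/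

section Finrank

variable {k ι : Type} [Field k] [Fintype ι] {V : ι → Type} [∀ i, AddCommGroup (V i)]
  [∀ i, Module k (V i)]

theorem sum_finrank_pos_of_ne_bot [∀ i, FiniteDimensional k (V i)]
    {U : ∀ i, Submodule k (V i)} (h : ¬ ∀ i, U i = ⊥) :
    0 < ∑ i, (finrank k (U i) : ℤ) := by
  push Not at h
  obtain ⟨j, hj⟩ := h
  refine Finset.sum_pos' (fun i _ => by positivity) ⟨j, Finset.mem_univ j, ?_⟩
  exact_mod_cast Submodule.one_le_finrank_iff.mpr hj

theorem sum_finrank_lt_of_ne_top [∀ i, FiniteDimensional k (V i)]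
    {U : ∀ i, Submodule k (V i)} (h : ¬ ∀ i, U i = ⊤) :
    ∑ i, (finrank k (U i) : ℤ) < ∑ i, (finrank k (V i) : ℤ) := by
  push Not at h
  obtain ⟨j, hj⟩ := h
  refine Finset.sum_lt_sum (fun i _ => ?_) ⟨j, Finset.mem_univ j, ?_⟩
  · exact_mod_cast Submodule.finrank_le (U i)
  · exact_mod_cast Submodule.finrank_lt hj

end Finrank

section Framed

variable {k Q0 Q1 : Type} [Field k] {src tgt : Q1 → Q0} {V : Q0 → Type}
  [∀ i, AddCommGroup (V i)] [∀ i, Module k (V i)] {E : Q0 → Type} [∀ i, AddCommGroup (E i)]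
  [∀ i, Module k (E i)] (M : ∀ a : Q1, V (src a) →ₗ[k] V (tgt a)) (B : ∀ i : Q0, V i →ₗ[k] E i)

@[simp]
theorem pathMap_nil (j : Q0) (v : V j) : pathMap M (QPath.nil j) v = v := by
  simp [pathMap]

@[simp]
theorem pathMap_cons {j : Q0} (a : Q1) (p : QPath src tgt j (src a)) (v : V j) :
    pathMap M (QPath.cons a p) v = M a (pathMap M p v) := by
  simp [pathMap]

def IsSubrep (U : ∀ i, Submodule k (V i)) : Prop :=
  ∀ a : Q1, ∀ x ∈ U (src a), M a x ∈ U (tgt a)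

theorem IsSubrep.pathMap_mem {M} {U : ∀ i, Submodule k (V i)} (hU : IsSubrep M U) {j i : Q0}
    (q : QPath src tgt j i) {v : V j} (hv : v ∈ U j) : pathMap M q v ∈ U i := by
  induction q with
  | nil => simpa using hv
  | cons a p ih => simpa using hU a _ ih

/-- The subrepresentation generated by `v`. -/
def pathSpan {j : Q0} (v : V j) (i : Q0) : Submodule k (V i) :=
  Submodule.span k (Set.range fun q : QPath src tgt j i => pathMap M q v)

theorem isSubrep_pathSpan {j : Q0} (v : V j) : IsSubrep M (pathSpan M v) := by
  intro a x hx
  have hmap : (pathSpan M v (src a)).map (M a) ≤ pathSpan M v (tgt a) := by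
    rw [pathSpan, Submodule.map_span, Submodule.span_le]
    rintro _ ⟨_, ⟨q, rfl⟩, rfl⟩
    exact Submodule.subset_span ⟨QPath.cons a q, pathMap_cons M a q v⟩
  exact hmap ⟨x, hx, rfl⟩

theorem mem_pathSpan_self {j : Q0} (v : V j) : v ∈ pathSpan M v j :=
  Submodule.subset_span ⟨QPath.nil j, pathMap_nil M j v⟩

theorem pathSpan_le_ker_iff {j : Q0} (v : V j) :
    (∀ i, pathSpan M v i ≤ LinearMap.ker (B i)) ↔
      ∀ (i : Q0) (q : QPath src tgt j i), B i (pathMap M q v) = 0 := by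
  simp only [pathSpan, Submodule.span_le, Set.range_subset_iff, SetLike.mem_coe,
    LinearMap.mem_ker]

theorem exists_subrep_le_ker_iff :
    (∃ U : ∀ i, Submodule k (V i),
        IsSubrep M U ∧ (¬ ∀ i, U i = ⊥) ∧ ∀ i, U i ≤ LinearMap.ker (B i)) ↔
      ∃ (j : Q0) (v : V j), v ≠ 0 ∧
        ∀ (i : Q0) (q : QPath src tgt j i), B i (pathMap M q v) = 0 := by
  constructor
  · rintro ⟨U, hU, hne, hker⟩
    push Not at hne
    obtain ⟨j, hj⟩ := hne
    obtain ⟨v, hv, hv0⟩ := Submodule.exists_mem_ne_zero_of_ne_bot hj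
    exact ⟨j, v, hv0, fun i q => hker i (hU.pathMap_mem q hv)⟩
  · rintro ⟨j, v, hv0, hBv⟩
    refine ⟨pathSpan M v, isSubrep_pathSpan M v, fun hbot => hv0 ?_,
      (pathSpan_le_ker_iff M B v).mpr hBv⟩
    simpa [hbot j] using mem_pathSpan_self M v

/-- The component `V_j → ⊕_q E_{t(q)}` of the homomorphism `ψ_{M,B} : M → I_β`. -/
def framingMap (j : Q0) : V j →ₗ[k] ((q : Σ i, QPath src tgt j i) → E q.1) :=
  LinearMap.pi fun q => (B q.1).comp (pathMap M q.2)

theorem forall_injective_framingMap_iff :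
    (∀ j, Function.Injective (framingMap M B j)) ↔
      ¬ ∃ U : ∀ i, Submodule k (V i),
        IsSubrep M U ∧ (¬ ∀ i, U i = ⊥) ∧ ∀ i, U i ≤ LinearMap.ker (B i) := by
  simp only [exists_subrep_le_ker_iff, injective_iff_map_eq_zero, funext_iff, framingMap,
    LinearMap.pi_apply, LinearMap.comp_apply, Pi.zero_apply, Sigma.forall, not_exists, not_and]
  exact forall₂_congr fun _ _ => not_imp_not.symm

variable [Fintype Q0]

/-- The value of the stability parameter `c_α` (`1` at every vertex of the quiver, `-|α|` at
the framing vertex) on the dimension vector of `(U, L)`. -/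
noncomputable def framedWeight (U : ∀ i, Submodule k (V i)) (L : Submodule k k) : ℤ :=
  (∑ i, (finrank k (U i) : ℤ)) - (∑ i, (finrank k (V i) : ℤ)) * (finrank k L : ℤ)

def IsSemistable : Prop :=
  ∀ U L, IsSubrep M U → (L = ⊥ → ∀ i, U i ≤ LinearMap.ker (B i)) → framedWeight U L ≤ 0

def IsStable : Prop :=
  ∀ U L, IsSubrep M U → (L = ⊥ → ∀ i, U i ≤ LinearMap.ker (B i)) →
    ¬((∀ i, U i = ⊥) ∧ L = ⊥) → ¬((∀ i, U i = ⊤) ∧ L = ⊤) → framedWeight U L < 0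

theorem framedWeight_bot (U : ∀ i, Submodule k (V i)) :
    framedWeight U ⊥ = ∑ i, (finrank k (U i) : ℤ) := by
  simp [framedWeight]

theorem framedWeight_top (U : ∀ i, Submodule k (V i)) :
    framedWeight U ⊤ = ∑ i, (finrank k (U i) : ℤ) - ∑ i, (finrank k (V i) : ℤ) := by
  simp [framedWeight]

variable {M B}

theorem IsSemistable.not_exists_subrep_le_ker [∀ i, FiniteDimensional k (V i)]
    (h : IsSemistable M B) :
    ¬ ∃ U : ∀ i, Submodule k (V i),
      IsSubrep M U ∧ (¬ ∀ i, U i = ⊥) ∧ ∀ i, U i ≤ LinearMap.ker (B i) := by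
  rintro ⟨U, hU, hne, hker⟩
  have hweight := h U ⊥ hU fun _ => hker
  rw [framedWeight_bot] at hweight
  exact hweight.not_gt (sum_finrank_pos_of_ne_bot hne)

theorem isStable_of_not_exists_subrep_le_ker [∀ i, FiniteDimensional k (V i)]
    (h : ¬ ∃ U : ∀ i, Submodule k (V i),
      IsSubrep M U ∧ (¬ ∀ i, U i = ⊥) ∧ ∀ i, U i ≤ LinearMap.ker (B i)) :
    IsStable M B := by
  intro U L hU hker hnbot hntop
  rcases eq_bot_or_eq_top L with rfl | rfl
  · exact absurd ⟨U, hU, fun hbot => hnbot ⟨hbot, rfl⟩, hker rfl⟩ h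
  · rw [framedWeight_top, sub_neg]
    exact sum_finrank_lt_of_ne_top fun htop => hntop ⟨htop, rfl⟩

theorem IsStable.isSemistable (h : IsStable M B) : IsSemistable M B := by
  intro U L hU hker
  by_cases hbot : (∀ i, U i = ⊥) ∧ L = ⊥
  · obtain ⟨hUbot, rfl⟩ := hbot
    obtain rfl : U = fun _ => ⊥ := funext hUbot
    simp [framedWeight_bot]
  by_cases htop : (∀ i, U i = ⊤) ∧ L = ⊤
  · obtain ⟨hUtop, rfl⟩ := htop
    obtain rfl : U = fun _ => ⊤ := funext hUtop
    simp [framedWeight_top]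
  exact (h U L hU hker hbot htop).le

end Framed

theorem statement3_general {k Q0 Q1 : Type} [Field k] [Fintype Q0]
    (src tgt : Q1 → Q0)
    (V : Q0 → Type) [∀ i, AddCommGroup (V i)] [∀ i, Module k (V i)]
    [∀ i, FiniteDimensional k (V i)]
    (E : Q0 → Type) [∀ i, AddCommGroup (E i)] [∀ i, Module k (E i)]
    (M : ∀ a : Q1, V (src a) →ₗ[k] V (tgt a))
    (B : ∀ i : Q0, V i →ₗ[k] E i) :
    List.TFAE
      [ (∀ (U : ∀ i : Q0, Submodule k (V i)) (L : Submodule k k),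
          (∀ a : Q1, ∀ x ∈ U (src a), M a x ∈ U (tgt a)) →
          (L = ⊥ → ∀ i : Q0, U i ≤ LinearMap.ker (B i)) →
          (∑ i : Q0, (finrank k (U i) : ℤ))
            - (∑ i : Q0, (finrank k (V i) : ℤ)) * (finrank k L : ℤ) ≤ 0),
        (∀ (U : ∀ i : Q0, Submodule k (V i)) (L : Submodule k k),
          (∀ a : Q1, ∀ x ∈ U (src a), M a x ∈ U (tgt a)) →
          (L = ⊥ → ∀ i : Q0, U i ≤ LinearMap.ker (B i)) →
          ¬((∀ i, U i = ⊥) ∧ L = ⊥) → ¬((∀ i, U i = ⊤) ∧ L = ⊤) →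
          (∑ i : Q0, (finrank k (U i) : ℤ))
            - (∑ i : Q0, (finrank k (V i) : ℤ)) * (finrank k L : ℤ) < 0),
        (¬ ∃ U : ∀ i : Q0, Submodule k (V i),
          (∀ a : Q1, ∀ x ∈ U (src a), M a x ∈ U (tgt a)) ∧
          (¬ ∀ i, U i = ⊥) ∧ (∀ i : Q0, U i ≤ LinearMap.ker (B i))),
        (∀ j : Q0, Function.Injective
          (fun v : V j =>
            fun q : Σ i : Q0, QPath src tgt j i => B q.1 (pathMap M q.2 v))) ] := by
  tfae_have 1 → 3 := IsSemistable.not_exists_subrep_le_ker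
  tfae_have 3 → 2 := isStable_of_not_exists_subrep_le_ker
  tfae_have 2 → 1 := IsStable.isSemistable
  tfae_have 3 ↔ 4 := (forall_injective_framingMap_iff M B).symm
  tfae_finish

/-- Engel–Reineke, dual version: for a framed pair `(M,B)` with `B i : V i →ₗ E i`, the
following are equivalent: (a) `(M,B)` is `c_α`-semi-stable, (b) `(M,B)` is `c_α`-stable,
(c) no nonzero subrepresentation of `M` is contained in the kernels of the `B i`, (d) the
homomorphism `ψ_{M,B} : M → I_β` is injective at every vertex. -/
theorem statement3 {k Q0 Q1 : Type} [Field k] [Fintype Q0] [Fintype Q1] [DecidableEq Q0]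
    (src tgt : Q1 → Q0) [∀ i j, Fintype (QPath src tgt i j)]
    (V : Q0 → Type) [∀ i, AddCommGroup (V i)] [∀ i, Module k (V i)]
    [∀ i, FiniteDimensional k (V i)]
    (E : Q0 → Type) [∀ i, AddCommGroup (E i)] [∀ i, Module k (E i)]
    [∀ i, FiniteDimensional k (E i)]
    (M : ∀ a : Q1, V (src a) →ₗ[k] V (tgt a))
    (B : ∀ i : Q0, V i →ₗ[k] E i) :
    List.TFAE
      [ (∀ (U : ∀ i : Q0, Submodule k (V i)) (L : Submodule k k),
          (∀ a : Q1, ∀ x ∈ U (src a), M a x ∈ U (tgt a)) →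
          (L = ⊥ → ∀ i : Q0, U i ≤ LinearMap.ker (B i)) →
          (∑ i : Q0, (finrank k (U i) : ℤ))
            - (∑ i : Q0, (finrank k (V i) : ℤ)) * (finrank k L : ℤ) ≤ 0),
        (∀ (U : ∀ i : Q0, Submodule k (V i)) (L : Submodule k k),
          (∀ a : Q1, ∀ x ∈ U (src a), M a x ∈ U (tgt a)) →
          (L = ⊥ → ∀ i : Q0, U i ≤ LinearMap.ker (B i)) →
          ¬((∀ i, U i = ⊥) ∧ L = ⊥) → ¬((∀ i, U i = ⊤) ∧ L = ⊤) →
          (∑ i : Q0, (finrank k (U i) : ℤ))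
            - (∑ i : Q0, (finrank k (V i) : ℤ)) * (finrank k L : ℤ) < 0),
        (¬ ∃ U : ∀ i : Q0, Submodule k (V i),
          (∀ a : Q1, ∀ x ∈ U (src a), M a x ∈ U (tgt a)) ∧
          (¬ ∀ i, U i = ⊥) ∧ (∀ i : Q0, U i ≤ LinearMap.ker (B i))),
        (∀ j : Q0, Function.Injective
          (fun v : V j =>
            fun q : Σ i : Q0, QPath src tgt j i => B q.1 (pathMap M q.2 v))) ] :=
  statement3_general src tgt V E M B
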